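/- arXiv:2410.00472 — 2 statements merged into one kernel-verified Lean document; each statement's English description precedes it below -/
import Mathlib

section
/- If P is a monotone Markov kernel from S₀ to S₁, then for all Borel probability measures μ and ν on S₀, α_O(μ ⊗ P, ν ⊗ P) = α_O(μ, ν), where the ordered affinity on the left is computed on the product space S₀ × S₁ with the pointwise product order. -/
open MeasureTheory

noncomputable section

/-- `μ` is stochastically dominated by `ν`: equal total mass and `μ I ≤ ν I`
for every increasing (upper) Borel set `I`. -/
def StochDom {α : Type*} [MeasurableSpace α] [Preorder α] (μ ν : Measure α) : Prop :=
  μ Set.univ = ν Set.univ ∧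
    ∀ I : Set α, MeasurableSet I → IsUpperSet I → μ I ≤ ν I

/-- `(μ', ν')` is an ordered component pair for `(μ, ν)`. -/
def IsOCP {α : Type*} [MeasurableSpace α] [Preorder α] (μ ν μ' ν' : Measure α) : Prop :=
  μ' ≤ μ ∧ ν' ≤ ν ∧ StochDom μ' ν'

/-- The ordered affinity `α_O(μ, ν)`: supremum of the mass `μ'(S)` over all
ordered component pairs `(μ', ν')` for `(μ, ν)`. -/
def alphaO {α : Type*} [MeasurableSpace α] [Preorder α] (μ ν : Measure α) : ℝ :=
  sSup {r : ℝ | ∃ μ' ν' : Measure α, IsOCP μ ν μ' ν' ∧ r = (μ' Set.univ).toReal}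

/-- The total ordered variation distance `γ(μ, ν) = 2 - α_O(μ, ν) - α_O(ν, μ)`. -/
def gammaO {α : Type*} [MeasurableSpace α] [Preorder α] (μ ν : Measure α) : ℝ :=
  2 - alphaO μ ν - alphaO ν μ

variable {S : Type*} [TopologicalSpace S] [PolishSpace S] [MeasurableSpace S]
  [BorelSpace S] [PartialOrder S] [OrderClosedTopology S] [Nonempty S]

/-- A bounded monotone measurable function has smaller integral under a
stochastically dominated measure. -/
lemma lintegral_mono_of_stochDom {α : Type*} [MeasurableSpace α] [Preorder α]
    {m m' : Measure α} (h : StochDom m m') {g : α → ENNReal}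
    (hgmeas : Measurable g) (hgmono : Monotone g) (hgle : ∀ x, g x ≤ 1) :
    ∫⁻ x, g x ∂m ≤ ∫⁻ x, g x ∂m' := by
  set f : α → ℝ := fun x => (g x).toReal with hf
  have hfmeas : Measurable f := hgmeas.ennreal_toReal
  have hgne : ∀ x, g x ≠ ⊤ := fun x => (lt_of_le_of_lt (hgle x) ENNReal.one_lt_top).ne
  have hofr : ∀ x, ENNReal.ofReal (f x) = g x := fun x => ENNReal.ofReal_toReal (hgne x)
  have hfmono : Monotone f := fun a b hab => ENNReal.toReal_mono (hgne b) (hgmono hab)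
  have key : ∀ (mm : Measure α), ∫⁻ x, g x ∂mm = ∫⁻ t in Set.Ioi (0:ℝ), mm {a | t < f a} := by
    intro mm
    rw [← lintegral_eq_lintegral_meas_lt mm
      (Filter.Eventually.of_forall fun x => ENNReal.toReal_nonneg) hfmeas.aemeasurable]
    exact lintegral_congr fun x => (hofr x).symm
  rw [key m, key m']
  refine lintegral_mono fun t => ?_
  have hset : {a | t < f a} = f ⁻¹' Set.Ioi t := rfl
  refine h.2 _ (hset ▸ hfmeas measurableSet_Ioi) ?_
  intro a b hab ha
  exact lt_of_lt_of_le ha (hfmono hab)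

/-- The ordered affinity of the joint distributions equals the ordered affinity
of the initial distributions, for a monotone Markov kernel. -/
theorem alphaO_joint_eq {S₀ S₁ : Type*}
    [TopologicalSpace S₀] [PolishSpace S₀] [MeasurableSpace S₀] [BorelSpace S₀]
    [PartialOrder S₀] [OrderClosedTopology S₀] [Nonempty S₀]
    [TopologicalSpace S₁] [PolishSpace S₁] [MeasurableSpace S₁] [BorelSpace S₁]
    [PartialOrder S₁] [OrderClosedTopology S₁] [Nonempty S₁]
    (P : S₀ → Measure S₁) (hPmeas : Measurable P)
    (hPprob : ∀ x, IsProbabilityMeasure (P x))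
    (hPmono : ∀ x y : S₀, x ≤ y → StochDom (P x) (P y))
    (μ ν : Measure S₀) [IsProbabilityMeasure μ] [IsProbabilityMeasure ν] :
    alphaO (μ.bind (fun x => (P x).map (fun y => (x, y))))
           (ν.bind (fun x => (P x).map (fun y => (x, y)))) = alphaO μ ν := by
  classical
  set κ : ProbabilityTheory.Kernel S₀ S₁ := ⟨P, hPmeas⟩ with hκ
  haveI : ProbabilityTheory.IsMarkovKernel κ := ⟨fun a => hPprob a⟩
  have hsec : ∀ {t : Set (S₀ × S₁)}, MeasurableSet t →
      Measurable fun x => P x (Prod.mk x ⁻¹' t) := fun ht =>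
    ProbabilityTheory.Kernel.measurable_kernel_prodMk_left (κ := κ) ht
  have hfmeas : Measurable fun x : S₀ => (P x).map (fun y => (x, y)) := by
    apply Measure.measurable_of_measurable_coe
    intro s hs
    have : (fun x : S₀ => ((P x).map (fun y => (x, y))) s)
        = fun x => P x (Prod.mk x ⁻¹' s) := by
      funext x
      rw [Measure.map_apply measurable_prodMk_left hs]
    rw [this]
    exact hsec hs
  set J : Measure S₀ → Measure (S₀ × S₁) :=
    fun m => m.bind (fun x => (P x).map (fun y => (x, y))) with hJdef
  have hJ : ∀ (m : Measure S₀) (s : Set (S₀ × S₁)), MeasurableSet s →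
      J m s = ∫⁻ x, P x (Prod.mk x ⁻¹' s) ∂m := by
    intro m s hs
    rw [hJdef]
    simp only
    rw [Measure.bind_apply hs hfmeas.aemeasurable]
    refine lintegral_congr fun x => ?_
    rw [Measure.map_apply measurable_prodMk_left hs]
  have hJuniv : ∀ m : Measure S₀, J m Set.univ = m Set.univ := by
    intro m
    rw [hJ m _ MeasurableSet.univ]
    simp only [Set.preimage_univ]
    simp [(hPprob _).measure_univ]
  -- J is monotone in the measure
  have hJmono : ∀ {m m' : Measure S₀}, m ≤ m' → J m ≤ J m' := by
    intro m m' hle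
    rw [Measure.le_iff]
    intro s hs
    rw [hJ m s hs, hJ m' s hs]
    exact lintegral_mono' hle le_rfl
  -- J preserves stochastic domination
  have hJsd : ∀ {m m' : Measure S₀}, StochDom m m' → StochDom (J m) (J m') := by
    intro m m' h
    constructor
    · rw [hJuniv, hJuniv, h.1]
    · intro I hImeas hIup
      rw [hJ m I hImeas, hJ m' I hImeas]
      refine lintegral_mono_of_stochDom h (hsec hImeas) ?_ (fun x => prob_le_one)
      intro x x' hxx'
      have hsub : Prod.mk x ⁻¹' I ⊆ Prod.mk x' ⁻¹' I := by
        intro y hy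
        exact hIup (Prod.mk_le_mk.2 ⟨hxx', le_rfl⟩) hy
      have hupper : IsUpperSet (Prod.mk x ⁻¹' I) := by
        intro y y' hyy' hy
        exact hIup (Prod.mk_le_mk.2 ⟨le_rfl, hyy'⟩) hy
      calc P x (Prod.mk x ⁻¹' I) ≤ P x' (Prod.mk x ⁻¹' I) :=
            (hPmono x x' hxx').2 _ (measurable_prodMk_left hImeas) hupper
        _ ≤ P x' (Prod.mk x' ⁻¹' I) := measure_mono hsub
  -- J μ of a cylinder
  have hJcyl : ∀ (s : Set S₀), MeasurableSet s → J μ (Prod.fst ⁻¹' s) = μ s ∧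
      J ν (Prod.fst ⁻¹' s) = ν s := by
    intro s hs
    have hmeas : MeasurableSet (Prod.fst ⁻¹' s : Set (S₀ × S₁)) := measurable_fst hs
    have hval : ∀ x, P x (Prod.mk x ⁻¹' (Prod.fst ⁻¹' s))
        = s.indicator (fun _ => 1) x := by
      intro x
      by_cases hx : x ∈ s
      · have : Prod.mk x ⁻¹' ((Prod.fst ⁻¹' s) : Set (S₀ × S₁)) = (Set.univ : Set S₁) := by
          ext y; simp [hx]
        rw [this, (hPprob x).measure_univ, Set.indicator_of_mem hx]
      · have : Prod.mk x ⁻¹' ((Prod.fst ⁻¹' s) : Set (S₀ × S₁)) = (∅ : Set S₁) := by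
          ext y; simp [hx]
        rw [this, measure_empty, Set.indicator_of_notMem hx]
    constructor <;>
    · rw [hJ _ _ hmeas]
      rw [lintegral_congr hval, lintegral_indicator hs]
      simp
  -- projection facts
  have hproj_apply : ∀ (mt : Measure (S₀ × S₁)) (s : Set S₀), MeasurableSet s →
      mt.map Prod.fst s = mt (Prod.fst ⁻¹' s) := by
    intro mt s hs
    rw [Measure.map_apply measurable_fst hs]
  -- the two sets of achievable masses coincide
  have hset : {r : ℝ | ∃ μ' ν' : Measure (S₀ × S₁), IsOCP (J μ) (J ν) μ' ν' ∧
        r = (μ' Set.univ).toReal}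
      = {r : ℝ | ∃ μ' ν' : Measure S₀, IsOCP μ ν μ' ν' ∧ r = (μ' Set.univ).toReal} := by
    ext r
    constructor
    · rintro ⟨mt, nt, ⟨h1, h2, h3⟩, rfl⟩
      refine ⟨mt.map Prod.fst, nt.map Prod.fst, ⟨?_, ?_, ?_, ?_⟩, ?_⟩
      · rw [Measure.le_iff]
        intro s hs
        rw [hproj_apply mt s hs]
        exact le_trans (h1 _) ((hJcyl s hs).1.le)
      · rw [Measure.le_iff]
        intro s hs
        rw [hproj_apply nt s hs]
        exact le_trans (h2 _) ((hJcyl s hs).2.le)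
      · rw [hproj_apply mt _ MeasurableSet.univ, hproj_apply nt _ MeasurableSet.univ]
        simpa using h3.1
      · intro I hImeas hIup
        rw [hproj_apply mt _ hImeas, hproj_apply nt _ hImeas]
        refine h3.2 _ (measurable_fst hImeas) ?_
        rintro ⟨a, b⟩ ⟨a', b'⟩ hab ha
        exact hIup (Prod.mk_le_mk.1 hab).1 ha
      · rw [hproj_apply mt _ MeasurableSet.univ]
        simp
    · rintro ⟨m, n, ⟨h1, h2, h3⟩, rfl⟩
      exact ⟨J m, J n, ⟨hJmono h1, hJmono h2, hJsd h3⟩, by rw [hJuniv]⟩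
  show sSup _ = sSup _
  rw [hset]
end
end

section
/- If P is a monotone Markov kernel on S, then the map μ ↦ μP is nonexpansive in the total ordered variation metric: γ(μP, νP) ≤ γ(μ, ν) for all Borel probability measures μ and ν on S. -/
open MeasureTheory

noncomputable section

variable {S : Type*} [TopologicalSpace S] [PolishSpace S] [MeasurableSpace S]
  [BorelSpace S] [PartialOrder S] [OrderClosedTopology S] [Nonempty S]

open scoped ENNReal
open Set

set_option linter.unusedSectionVars false in
/-- Monotone bounded measurable functions have monotone integrals under
stochastic domination (layer-cake argument). -/
theorem lintegral_mono_stochDom' {μ ν : Measure S} (h : StochDom μ ν)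
    (f : S → ℝ≥0∞) (hf : Measurable f) (hb : ∀ x, f x ≤ 1)
    (hmono : ∀ x y, x ≤ y → f x ≤ f y) :
    ∫⁻ x, f x ∂μ ≤ ∫⁻ x, f x ∂ν := by
  have hre : ∀ x, f x = ENNReal.ofReal ((f x).toReal) := fun x =>
    (ENNReal.ofReal_toReal (lt_of_le_of_lt (hb x) ENNReal.one_lt_top).ne).symm
  have hgm : Measurable fun x => (f x).toReal := hf.ennreal_toReal
  calc ∫⁻ x, f x ∂μ = ∫⁻ x, ENNReal.ofReal ((f x).toReal) ∂μ := by
        simp_rw [← hre]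
    _ = ∫⁻ t in Ioi (0:ℝ), μ {a | t < (f a).toReal} :=
        lintegral_eq_lintegral_meas_lt μ
          (Filter.Eventually.of_forall fun x => ENNReal.toReal_nonneg) hgm.aemeasurable
    _ ≤ ∫⁻ t in Ioi (0:ℝ), ν {a | t < (f a).toReal} := by
        refine lintegral_mono fun t => ?_
        refine h.2 _ (measurableSet_lt measurable_const hgm) ?_
        intro x y hxy hx
        exact lt_of_lt_of_le hx (ENNReal.toReal_mono
          (lt_of_le_of_lt (hb y) ENNReal.one_lt_top).ne (hmono x y hxy))
    _ = ∫⁻ x, ENNReal.ofReal ((f x).toReal) ∂ν :=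
        (lintegral_eq_lintegral_meas_lt ν
          (Filter.Eventually.of_forall fun x => ENNReal.toReal_nonneg) hgm.aemeasurable).symm
    _ = ∫⁻ x, f x ∂ν := by simp_rw [← hre]

/-- Stochastic domination is preserved by binding with a monotone Markov kernel. -/
theorem stochDom_bind {P : S → Measure S} (hPmeas : Measurable P)
    (hPprob : ∀ x, IsProbabilityMeasure (P x))
    (hPmono : ∀ x y : S, x ≤ y → StochDom (P x) (P y))
    {μ ν : Measure S} (h : StochDom μ ν) :
    StochDom (μ.bind P) (ν.bind P) := by
  constructor
  · rw [Measure.bind_apply MeasurableSet.univ hPmeas.aemeasurable,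
      Measure.bind_apply MeasurableSet.univ hPmeas.aemeasurable]
    simp only [measure_univ]
    rw [lintegral_one, lintegral_one, h.1]
  · intro I hI hIu
    rw [Measure.bind_apply hI hPmeas.aemeasurable, Measure.bind_apply hI hPmeas.aemeasurable]
    refine lintegral_mono_stochDom' h (fun x => P x I)
      ((Measure.measurable_coe hI).comp hPmeas) (fun x => prob_le_one) ?_
    intro x y hxy
    exact (hPmono x y hxy).2 I hI hIu

/-- Ordered affinity does not decrease under a monotone Markov kernel. -/
theorem alphaO_le_alphaO_bind {P : S → Measure S} (hPmeas : Measurable P)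
    (hPprob : ∀ x, IsProbabilityMeasure (P x))
    (hPmono : ∀ x y : S, x ≤ y → StochDom (P x) (P y))
    (μ ν : Measure S) [IsProbabilityMeasure μ] [IsProbabilityMeasure ν] :
    alphaO μ ν ≤ alphaO (μ.bind P) (ν.bind P) := by
  have hbindP : IsProbabilityMeasure (μ.bind P) := by
    constructor
    rw [Measure.bind_apply MeasurableSet.univ hPmeas.aemeasurable]
    simp [measure_univ]
  refine csSup_le_csSup ?_ ?_ ?_
  · -- bounded above by 1
    refine ⟨1, ?_⟩
    rintro r ⟨μ', ν', ⟨hμ', _, _⟩, rfl⟩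
    have h1 : μ' Set.univ ≤ (μ.bind P) Set.univ := hμ' Set.univ
    rw [hbindP.measure_univ] at h1
    calc (μ' Set.univ).toReal ≤ (1 : ℝ≥0∞).toReal :=
          ENNReal.toReal_mono ENNReal.one_ne_top h1
      _ = 1 := ENNReal.toReal_one
  · -- nonempty: the zero pair
    exact ⟨0, 0, 0, ⟨Measure.zero_le μ, Measure.zero_le ν,
      ⟨rfl, fun I _ _ => le_rfl⟩⟩, by simp⟩
  · -- subset
    rintro r ⟨μ', ν', ⟨hμ', hν', hsd⟩, rfl⟩
    refine ⟨μ'.bind P, ν'.bind P, ⟨?_, ?_, stochDom_bind hPmeas hPprob hPmono hsd⟩, ?_⟩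
    · refine Measure.le_iff.mpr fun s hs => ?_
      rw [Measure.bind_apply hs hPmeas.aemeasurable, Measure.bind_apply hs hPmeas.aemeasurable]
      exact lintegral_mono' hμ' le_rfl
    · refine Measure.le_iff.mpr fun s hs => ?_
      rw [Measure.bind_apply hs hPmeas.aemeasurable, Measure.bind_apply hs hPmeas.aemeasurable]
      exact lintegral_mono' hν' le_rfl
    · rw [Measure.bind_apply MeasurableSet.univ hPmeas.aemeasurable]
      simp [measure_univ]

/-- A monotone Markov kernel is nonexpansive in the total ordered variation
metric. -/
theorem gammaO_bind_le
    (P : S → Measure S) (hPmeas : Measurable P)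
    (hPprob : ∀ x, IsProbabilityMeasure (P x))
    (hPmono : ∀ x y : S, x ≤ y → StochDom (P x) (P y))
    (μ ν : Measure S) [IsProbabilityMeasure μ] [IsProbabilityMeasure ν] :
    gammaO (μ.bind P) (ν.bind P) ≤ gammaO μ ν := by
  have h1 := alphaO_le_alphaO_bind hPmeas hPprob hPmono μ ν
  have h2 := alphaO_le_alphaO_bind hPmeas hPprob hPmono ν μ
  unfold gammaO
  linarith
end
end
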